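/- Let n ≥ 2 and 1 ≤ m ≤ n, let φ be a phase function satisfying the homogeneous convex conditions as in the context, let α_i ∈ ℝ^n and a_{i,n+1} ∈ ℝ for i = 1,…,n+1−m, and let L be as in the context. Suppose η ∈ L with |η| = 1 and η ∈ span{α_1,…,α_{n+1−m}}. Then L ⊂ {tη : t ∈ ℝ}; that is, every ξ ∈ L is a scalar multiple of η. (The key dichotomy in Lemma 4.4: at points of L lying in the span of the α_i, the set L degenerates to a line.) -/

import Mathlib

open MeasureTheory Real RealInnerProductSpace

/-- The homogeneous convex conditions on a phase function `φ`: smooth away from the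
origin, positively homogeneous of degree one, and the Hessian (which annihilates the
radial direction) has its nonzero eigenvalues in `[1/2, 2]`, expressed through the
second derivative quadratic form on the orthogonal complement of the radial direction. -/
def HomogConvex (n : ℕ) (φ : EuclideanSpace ℝ (Fin n) → ℝ) : Prop :=
  ContDiffOn ℝ (⊤ : ℕ∞) φ {ξ : EuclideanSpace ℝ (Fin n) | ξ ≠ 0} ∧
  (∀ l : ℝ, 0 < l → ∀ ξ, φ (l • ξ) = l * φ ξ) ∧
  (∀ ξ : EuclideanSpace ℝ (Fin n), ‖ξ‖ = 1 →
    ∀ v : EuclideanSpace ℝ (Fin n), ⟪ξ, v⟫ = 0 →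
      (1 / 2) * ‖v‖ ^ 2 ≤ iteratedFDeriv ℝ 2 φ ξ ![v, v] ∧
      iteratedFDeriv ℝ 2 φ ξ ![v, v] ≤ 2 * ‖v‖ ^ 2)

section Aux

variable {n : ℕ} {φ : EuclideanSpace ℝ (Fin n) → ℝ}

lemma hc_open : IsOpen {ξ : EuclideanSpace ℝ (Fin n) | ξ ≠ 0} := by
  have : {ξ : EuclideanSpace ℝ (Fin n) | ξ ≠ 0} = {(0 : EuclideanSpace ℝ (Fin n))}ᶜ := by
    ext y; simp
  rw [this]; exact isOpen_compl_singleton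

lemma hc_contDiffAt (hφ : HomogConvex n φ) {x : EuclideanSpace ℝ (Fin n)} (hx : x ≠ 0) :
    ContDiffAt ℝ (⊤ : ℕ∞) φ x :=
  hφ.1.contDiffAt (hc_open.mem_nhds hx)

lemma hc_diffAt (hφ : HomogConvex n φ) {x : EuclideanSpace ℝ (Fin n)} (hx : x ≠ 0) :
    DifferentiableAt ℝ φ x :=
  (hc_contDiffAt hφ hx).differentiableAt (by simp)

lemma hc_snd_diffAt (hφ : HomogConvex n φ) {x : EuclideanSpace ℝ (Fin n)} (hx : x ≠ 0) :
    DifferentiableAt ℝ (fderiv ℝ φ) x :=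
  ((hc_contDiffAt hφ hx).fderiv_right (m := (⊤ : ℕ∞)) (by simp)).differentiableAt (by simp)

lemma fderiv_homog (hφ : HomogConvex n φ) {x : EuclideanSpace ℝ (Fin n)} (hx : x ≠ 0)
    {l : ℝ} (hl : 0 < l) : fderiv ℝ φ (l • x) = fderiv ℝ φ x := by
  have hlx : l • x ≠ 0 := smul_ne_zero (ne_of_gt hl) hx
  have hS : HasFDerivAt (fun y : EuclideanSpace ℝ (Fin n) => l • y)
      (l • ContinuousLinearMap.id ℝ (EuclideanSpace ℝ (Fin n))) x :=
    (hasFDerivAt_id x).const_smul l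
  have h1 : HasFDerivAt (fun y : EuclideanSpace ℝ (Fin n) => φ (l • y))
      ((fderiv ℝ φ (l • x)).comp (l • ContinuousLinearMap.id ℝ (EuclideanSpace ℝ (Fin n)))) x :=
    ((hc_diffAt hφ hlx).hasFDerivAt).comp x hS
  have heq : (fun y : EuclideanSpace ℝ (Fin n) => φ (l • y)) = fun y => l • φ y := by
    funext y; simpa [smul_eq_mul] using hφ.2.1 l hl y
  rw [heq] at h1
  have h2 : HasFDerivAt (fun y : EuclideanSpace ℝ (Fin n) => l • φ y)
      (l • fderiv ℝ φ x) x := ((hc_diffAt hφ hx).hasFDerivAt).const_smul l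
  have huniq := h1.unique h2
  ext v
  have := congrArg (fun (T : EuclideanSpace ℝ (Fin n) →L[ℝ] ℝ) => T v) huniq
  simp only [ContinuousLinearMap.comp_apply, ContinuousLinearMap.smul_apply,
    ContinuousLinearMap.id_apply, smul_eq_mul] at this
  rw [ContinuousLinearMap.map_smul, smul_eq_mul] at this
  exact mul_left_cancel₀ (ne_of_gt hl) this

lemma euler (hφ : HomogConvex n φ) {x : EuclideanSpace ℝ (Fin n)} (hx : x ≠ 0) :
    fderiv ℝ φ x x = φ x := by
  have hc : HasDerivAt (fun l : ℝ => l • x) x 1 := by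
    simpa using (hasDerivAt_id (1 : ℝ)).smul_const x
  have hder : HasFDerivAt φ (fderiv ℝ φ x) ((fun l : ℝ => l • x) 1) := by
    simpa using (hc_diffAt hφ hx).hasFDerivAt
  have h1 : HasDerivAt (fun l : ℝ => φ (l • x)) (fderiv ℝ φ x x) 1 := by
    exact hder.comp_hasDerivAt 1 hc
  have h1' : HasDerivAt (fun l : ℝ => l * φ x) (fderiv ℝ φ x x) 1 := by
    refine h1.congr_of_eventuallyEq ?_
    filter_upwards [eventually_gt_nhds zero_lt_one] with l hl
    exact (hφ.2.1 l hl x).symm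
  have h2 : HasDerivAt (fun l : ℝ => l * φ x) (φ x) 1 := by
    simpa using (hasDerivAt_id (1 : ℝ)).mul_const (φ x)
  exact h1'.unique h2

lemma snd_radial (hφ : HomogConvex n φ) {x : EuclideanSpace ℝ (Fin n)} (hx : x ≠ 0) :
    fderiv ℝ (fderiv ℝ φ) x x = 0 := by
  have hc : HasDerivAt (fun l : ℝ => l • x) x 1 := by
    simpa using (hasDerivAt_id (1 : ℝ)).smul_const x
  have hder : HasFDerivAt (fderiv ℝ φ) (fderiv ℝ (fderiv ℝ φ) x) ((fun l : ℝ => l • x) 1) := by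
    simpa using (hc_snd_diffAt hφ hx).hasFDerivAt
  have h1 : HasDerivAt (fun l : ℝ => fderiv ℝ φ (l • x)) (fderiv ℝ (fderiv ℝ φ) x x) 1 := by
    exact hder.comp_hasDerivAt 1 hc
  have h1' : HasDerivAt (fun _ : ℝ => fderiv ℝ φ x) (fderiv ℝ (fderiv ℝ φ) x x) 1 := by
    refine h1.congr_of_eventuallyEq ?_
    filter_upwards [eventually_gt_nhds zero_lt_one] with l hl
    exact (fderiv_homog hφ hx hl).symm
  exact (h1'.unique (hasDerivAt_const 1 _))

lemma snd_symm (hφ : HomogConvex n φ) {x : EuclideanSpace ℝ (Fin n)} (hx : x ≠ 0)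
    (v w : EuclideanSpace ℝ (Fin n)) :
    fderiv ℝ (fderiv ℝ φ) x v w = fderiv ℝ (fderiv ℝ φ) x w v := by
  refine second_derivative_symmetric_of_eventually (f := φ) ?_ (hc_snd_diffAt hφ hx).hasFDerivAt v w
  filter_upwards [hc_open.mem_nhds hx] with y hy
  exact (hc_diffAt hφ hy).hasFDerivAt

lemma snd_scal (hφ : HomogConvex n φ) {x : EuclideanSpace ℝ (Fin n)} (hx : x ≠ 0)
    {l : ℝ} (hl : 0 < l) (v w : EuclideanSpace ℝ (Fin n)) :
    l * fderiv ℝ (fderiv ℝ φ) (l • x) v w = fderiv ℝ (fderiv ℝ φ) x v w := by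
  have hlx : l • x ≠ 0 := smul_ne_zero (ne_of_gt hl) hx
  have hS : HasFDerivAt (fun y : EuclideanSpace ℝ (Fin n) => l • y)
      (l • ContinuousLinearMap.id ℝ (EuclideanSpace ℝ (Fin n))) x :=
    (hasFDerivAt_id x).const_smul l
  have h1 : HasFDerivAt (fun y : EuclideanSpace ℝ (Fin n) => fderiv ℝ φ (l • y))
      ((fderiv ℝ (fderiv ℝ φ) (l • x)).comp
        (l • ContinuousLinearMap.id ℝ (EuclideanSpace ℝ (Fin n)))) x :=
    ((hc_snd_diffAt hφ hlx).hasFDerivAt).comp x hS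
  have h1' : HasFDerivAt (fderiv ℝ φ)
      ((fderiv ℝ (fderiv ℝ φ) (l • x)).comp
        (l • ContinuousLinearMap.id ℝ (EuclideanSpace ℝ (Fin n)))) x := by
    refine h1.congr_of_eventuallyEq ?_
    filter_upwards [hc_open.mem_nhds hx] with y hy
    exact (fderiv_homog hφ hy hl).symm
  have huniq := h1'.unique (hc_snd_diffAt hφ hx).hasFDerivAt
  have := congrArg (fun (T : EuclideanSpace ℝ (Fin n) →L[ℝ]
      (EuclideanSpace ℝ (Fin n) →L[ℝ] ℝ)) => T v w) huniq
  simp only [ContinuousLinearMap.comp_apply, ContinuousLinearMap.smul_apply,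
    ContinuousLinearMap.id_apply] at this
  rw [ContinuousLinearMap.map_smul] at this
  simpa [smul_eq_mul] using this

lemma snd_lower (hφ : HomogConvex n φ) {z : EuclideanSpace ℝ (Fin n)} (hz : ‖z‖ = 1)
    (w : EuclideanSpace ℝ (Fin n)) :
    (1 / 2) * ‖w - ⟪z, w⟫ • z‖ ^ 2 ≤ fderiv ℝ (fderiv ℝ φ) z w w := by
  have hz0 : z ≠ 0 := by intro h; rw [h] at hz; simp at hz
  set v := w - ⟪z, w⟫ • z with hv
  have hzz : ⟪z, z⟫ = 1 := by
    rw [real_inner_self_eq_norm_sq, hz]; norm_num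
  have hvz : ⟪z, v⟫ = 0 := by
    rw [hv, inner_sub_right, inner_smul_right, hzz]; ring
  have hineq := (hφ.2.2 z hz v hvz).1
  rw [iteratedFDeriv_two_apply] at hineq
  simp only [Matrix.cons_val_zero, Matrix.cons_val_one, Matrix.head_cons] at hineq
  have hrad : ∀ u, fderiv ℝ (fderiv ℝ φ) z z u = 0 := by
    intro u; rw [snd_radial hφ hz0]; rfl
  have hrad' : ∀ u, fderiv ℝ (fderiv ℝ φ) z u z = 0 := fun u =>
    (snd_symm hφ hz0 u z).trans (hrad u)
  have hw : w = v + ⟪z, w⟫ • z := by rw [hv]; abel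
  have hexp : fderiv ℝ (fderiv ℝ φ) z w w = fderiv ℝ (fderiv ℝ φ) z v v := by
    conv_lhs => rw [hw]
    simp [map_add, ContinuousLinearMap.add_apply, ContinuousLinearMap.map_smul,
      ContinuousLinearMap.smul_apply, hrad, hrad']
  rw [hexp]
  exact hineq

end Aux
/-- The key dichotomy in Lemma 4.4: if `η ∈ L` is a unit vector lying in the span of
the `α_i`, then `L` is contained in the line `ℝη`. -/
theorem L_degenerates_to_line (n m : ℕ) (hn : 2 ≤ n) (hm1 : 1 ≤ m) (hm2 : m ≤ n)
    (φ : EuclideanSpace ℝ (Fin n) → ℝ) (hφ : HomogConvex n φ)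
    (α : Fin (n + 1 - m) → EuclideanSpace ℝ (Fin n)) (a : Fin (n + 1 - m) → ℝ)
    (η : EuclideanSpace ℝ (Fin n)) (hη1 : ‖η‖ = 1)
    (hηL : ∀ i, ⟪α i, gradient φ η⟫ = a i)
    (hηspan : η ∈ Submodule.span ℝ (Set.range α)) :
    ∀ ξ : EuclideanSpace ℝ (Fin n), 1 / 2 ≤ ‖ξ‖ → ‖ξ‖ ≤ 2 →
      (∀ i, ⟪α i, gradient φ ξ⟫ = a i) →
      ∃ t : ℝ, ξ = t • η := by
  intro ξ h12 _h2n hξL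
  have hξ0 : ξ ≠ 0 := by
    intro h; rw [h] at h12; simp at h12; linarith
  have hη0 : η ≠ 0 := by intro h; rw [h] at hη1; simp at hη1
  set r : ℝ := ‖ξ‖ with hr
  have hrpos : 0 < r := norm_pos_iff.2 hξ0
  set u : EuclideanSpace ℝ (Fin n) := r⁻¹ • ξ with hu
  have hru : r • u = ξ := by
    rw [hu, smul_smul, mul_inv_cancel₀ (ne_of_gt hrpos), one_smul]
  have hu1 : ‖u‖ = 1 := by
    rw [hu, norm_smul, norm_inv, norm_norm, ← hr, inv_mul_cancel₀ (ne_of_gt hrpos)]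
  have hu0 : u ≠ 0 := by intro h; rw [h] at hu1; simp at hu1
  by_cases hcol : ∃ c : ℝ, η = c • u
  · obtain ⟨c, hc⟩ := hcol
    have hc0 : c ≠ 0 := by rintro rfl; rw [zero_smul] at hc; exact hη0 hc
    refine ⟨r / c, ?_⟩
    rw [hc, smul_smul, div_mul_cancel₀ _ hc0, hru]
  exfalso
  have grad_inner : ∀ (x v : EuclideanSpace ℝ (Fin n)), ⟪gradient φ x, v⟫ = fderiv ℝ φ x v := by
    intro x v
    simp [gradient, InnerProductSpace.toDual_symm_apply]
  have key : ∀ x ∈ Submodule.span ℝ (Set.range α),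
      ⟪x, gradient φ ξ⟫ = ⟪x, gradient φ η⟫ := by
    intro x hx
    induction hx using Submodule.span_induction with
    | mem x hx => obtain ⟨i, rfl⟩ := hx; rw [hξL i, hηL i]
    | zero => simp
    | add x y _ _ hx hy => rw [inner_add_left, inner_add_left, hx, hy]
    | smul c x _ hx => rw [inner_smul_left, inner_smul_left, hx]
  have hgrad_eq : gradient φ ξ = gradient φ u := by
    simp only [gradient]
    rw [← hru, fderiv_homog hφ hu0 hrpos]
  have hfuη : fderiv ℝ φ u η = φ η := by
    rw [← grad_inner, ← hgrad_eq, real_inner_comm, key η hηspan, real_inner_comm,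
      grad_inner, euler hφ hη0]
  set w : EuclideanSpace ℝ (Fin n) := η - u with hw
  have hηuw : η = u + w := by rw [hw]; abel
  have hγ0 : ∀ t : ℝ, u + t • w ≠ 0 := by
    intro t h
    rcases eq_or_ne t 0 with rfl | ht
    · rw [zero_smul, add_zero] at h; exact hu0 h
    · apply hcol
      have h2 : t • w = -u := eq_neg_of_add_eq_zero_right h
      have h3 : w = (-(t⁻¹)) • u := by
        calc w = t⁻¹ • (t • w) := by rw [smul_smul, inv_mul_cancel₀ ht, one_smul]
        _ = t⁻¹ • (-u) := by rw [h2]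
        _ = (-(t⁻¹)) • u := by rw [smul_neg, neg_smul]
      exact ⟨1 + -(t⁻¹), by rw [hηuw, h3, add_smul, one_smul]⟩
  have pos : ∀ t : ℝ, 0 < fderiv ℝ (fderiv ℝ φ) (u + t • w) w w := by
    intro t
    set x := u + t • w with hx
    have hx0 : x ≠ 0 := hγ0 t
    set ρ := ‖x‖ with hρdef
    have hρ : 0 < ρ := norm_pos_iff.2 hx0
    set z := ρ⁻¹ • x with hz
    have hz1 : ‖z‖ = 1 := by
      rw [hz, norm_smul, norm_inv, norm_norm, ← hρdef, inv_mul_cancel₀ (ne_of_gt hρ)]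
    have hz0 : z ≠ 0 := by intro h; rw [h] at hz1; simp at hz1
    have hzx : ρ • z = x := by
      rw [hz, smul_smul, mul_inv_cancel₀ (ne_of_gt hρ), one_smul]
    have hscal := snd_scal hφ hz0 hρ w w
    rw [hzx] at hscal
    have hBx : fderiv ℝ (fderiv ℝ φ) x w w = ρ⁻¹ * fderiv ℝ (fderiv ℝ φ) z w w := by
      rw [← hscal, ← mul_assoc, inv_mul_cancel₀ (ne_of_gt hρ), one_mul]
    have hperp : w - ⟪z, w⟫ • z ≠ 0 := by
      intro h
      have hwz : w = ⟪z, w⟫ • z := by rwa [sub_eq_zero] at h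
      set c := ⟪z, w⟫ * ρ⁻¹ with hcdef
      have hwx : w = c • x := by rw [hcdef, mul_smul, ← hz, ← hwz]
      have hthis : w = c • u + (c * t) • w := by
        conv_lhs => rw [hwx, hx]
        rw [smul_add, smul_smul, smul_smul]
      have hlin : (1 - c * t) • w = c • u := by
        rw [sub_smul, one_smul]
        exact sub_eq_of_eq_add hthis
      rcases eq_or_ne c 0 with hceq0 | hc0
      · rw [hceq0, zero_mul, sub_zero, one_smul, zero_smul] at hlin
        exact hcol ⟨1, by rw [hηuw, hlin, add_zero, one_smul]⟩
      rcases eq_or_ne (1 - c * t) 0 with h1 | h1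
      · rw [h1, zero_smul] at hlin
        exact hu0 ((smul_eq_zero.1 hlin.symm).resolve_left hc0)
      · apply hcol
        refine ⟨1 + (1 - c * t)⁻¹ * c, ?_⟩
        have hwu : w = ((1 - c * t)⁻¹ * c) • u := by
          calc w = (1 - c * t)⁻¹ • ((1 - c * t) • w) := by
                rw [smul_smul, inv_mul_cancel₀ h1, one_smul]
          _ = (1 - c * t)⁻¹ • (c • u) := by rw [hlin]
          _ = ((1 - c * t)⁻¹ * c) • u := by rw [smul_smul]
        rw [hηuw, hwu, add_smul, one_smul]
    have hlow := snd_lower hφ hz1 w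
    have hnorm : (0:ℝ) < (1 / 2) * ‖w - ⟪z, w⟫ • z‖ ^ 2 := by
      have := norm_pos_iff.2 hperp
      positivity
    have hzpos : 0 < fderiv ℝ (fderiv ℝ φ) z w w := lt_of_lt_of_le hnorm hlow
    rw [hBx]
    positivity
  set γ : ℝ → EuclideanSpace ℝ (Fin n) := fun t => u + t • w with hγ
  have hγne : ∀ t, γ t ≠ 0 := hγ0
  have hγd : ∀ t, HasDerivAt γ w t := by
    intro t
    simpa [hγ] using ((hasDerivAt_id t).smul_const w).const_add u
  set g : ℝ → ℝ := fun t => φ (γ t) with hgdef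
  set g1 : ℝ → ℝ := fun t => fderiv ℝ φ (γ t) w with hg1def
  have hgd : ∀ t, HasDerivAt g (g1 t) t := by
    intro t
    have := ((hc_diffAt hφ (hγne t)).hasFDerivAt).comp_hasDerivAt t (hγd t)
    exact this
  have hg1d : ∀ t, HasDerivAt g1 (fderiv ℝ (fderiv ℝ φ) (γ t) w w) t := by
    intro t
    have h1 := ((hc_snd_diffAt hφ (hγne t)).hasFDerivAt).comp_hasDerivAt t (hγd t)
    have h2 := h1.clm_apply (hasDerivAt_const t w)
    simpa [hg1def] using h2
  have hmono : StrictMono g1 := strictMono_of_deriv_pos fun t => by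
    rw [(hg1d t).deriv]; exact pos t
  have hcont : Continuous g := continuous_iff_continuousAt.2 fun t => (hgd t).continuousAt
  obtain ⟨c, hc, hceq⟩ := exists_hasDerivAt_eq_slope g g1 zero_lt_one
      hcont.continuousOn (fun x _ => hgd x)
  have hγ1 : γ 1 = η := by rw [hγ]; simp [hw]
  have hγ00 : γ 0 = u := by rw [hγ]; simp
  have hg10 : g1 0 = φ η - φ u := by
    rw [hg1def]
    simp only [hγ00, hw, map_sub]
    rw [hfuη, euler hφ hu0]
  have hslope : (g 1 - g 0) / (1 - 0) = g1 0 := by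
    rw [hg10, hgdef]
    simp only [hγ1, hγ00]
    norm_num
  rw [hslope] at hceq
  exact (ne_of_gt (hmono hc.1)) hceq
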